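/- Let α, β be reals with α > −1, β > −1, and α + β ∉ {−1, 0, 1, 2}. Then for every n ≥ 1, in ℝ[X]: (x + 1)·P_{n−1}^{(α,β)}(x) = P_n^{(α,β−1)}(x) + [2(β+n−1)(n+α+β−1)/((2n+α+β−1)(2n+α+β−2))]·P_{n−1}^{(α,β−1)}(x). -/

import Mathlib

/-!
Write `P_n = P_n^{(α,β)}`, `Q_n = P_n^{(α,β-1)}` and `χ_n` for the coefficient in the statement.
Expanding `(X + 1) P_{n+2}` by the recurrence of `P` and substituting the identity for `n` and
`n + 1`, then expanding `X Q_{n+1}` and `Q_{n+3}` by the recurrence of `Q`, the identity for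
`n + 2` reduces to three relations between `χ` and the recurrence coefficients. These are
rational identities in `n`, `α`, `β` whose denominators are of the form `2n + α + β + k - 1`,
`k ∈ ℕ`; they never vanish because `α + β > -2` and `α + β ∉ {-1, 0, 1}`.
-/

open Polynomial

/-- `jacobiC a b n` is the recurrence coefficient `c_{n+1}^{(a,b)}` of the monic
Jacobi polynomials. -/
noncomputable def jacobiC (a b : ℝ) (n : ℕ) : ℝ :=
  (b ^ 2 - a ^ 2) / ((2 * (n : ℝ) + a + b) * (2 * (n : ℝ) + a + b + 2))

/-- `jacobiL a b n` is the recurrence coefficient `λ_{n+1}^{(a,b)}` of the monic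
Jacobi polynomials. -/
noncomputable def jacobiL (a b : ℝ) (n : ℕ) : ℝ :=
  4 * (n : ℝ) * ((n : ℝ) + a) * ((n : ℝ) + b) * ((n : ℝ) + a + b) /
    ((2 * (n : ℝ) + a + b) ^ 2 * (2 * (n : ℝ) + a + b + 1) * (2 * (n : ℝ) + a + b - 1))

/-- The monic Jacobi polynomials `P_n^{(a,b)}`, defined by the three-term recurrence
`P_{n+1} = (X - c_{n+1}) P_n - λ_{n+1} P_{n-1}` with `P_{-1} = 0`, `P_0 = 1`. -/
noncomputable def jacobiP (a b : ℝ) : ℕ → Polynomial ℝ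
  | 0 => 1
  | 1 => X - Polynomial.C (jacobiC a b 0)
  | n + 2 => (X - Polynomial.C (jacobiC a b (n + 1))) * jacobiP a b (n + 1)
      - Polynomial.C (jacobiL a b (n + 1)) * jacobiP a b n

noncomputable def jacobiChi (α β : ℝ) (n : ℕ) : ℝ :=
  2 * (β + (n : ℝ) - 1) * ((n : ℝ) + α + β - 1) /
    ((2 * (n : ℝ) + α + β - 1) * (2 * (n : ℝ) + α + β - 2))

structure IsMonicRecurrence {R : Type*} [CommRing R] (p : ℕ → R[X]) (c l : ℕ → R) : Prop where
  zero : p 0 = 1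
  one : p 1 = X - C (c 0)
  add_two : ∀ n, p (n + 2) = (X - C (c (n + 1))) * p (n + 1) - C (l (n + 1)) * p n

theorem jacobiP_isMonicRecurrence (a b : ℝ) :
    IsMonicRecurrence (jacobiP a b) (jacobiC a b) (jacobiL a b) :=
  ⟨rfl, rfl, fun _ => rfl⟩

section Connection

variable {R : Type*} [CommRing R] {p q : ℕ → R[X]} {c l d μ χ : ℕ → R} {a : R}

/-- The identity passes from `n`, `n + 1` to `n + 2` through the two recurrences; `hχ`, `hμ`, `hl`
are what matching the coefficients of `q (n + 2)`, `q (n + 1)`, `q n` then demands, and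
`h₀`, `hμ₀` are the same conditions for the two initial cases. -/
theorem X_add_C_mul_eq_add_C_mul_of_isMonicRecurrence
    (hp : IsMonicRecurrence p c l) (hq : IsMonicRecurrence q d μ)
    (h₀ : χ 1 - d 0 = a)
    (hχ : ∀ n, χ (n + 2) - d (n + 1) = χ (n + 1) - c n)
    (hμ₀ : χ 1 * (d 0 - c 0) + μ 1 = 0)
    (hμ : ∀ n, χ (n + 2) * (d (n + 1) - c (n + 1)) + μ (n + 2) = l (n + 1))
    (hl : ∀ n, χ (n + 2) * μ (n + 1) = l (n + 1) * χ (n + 1)) (n : ℕ) :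
    (X + C a) * p n = q (n + 1) + C (χ (n + 1)) * q n := by
  have hC₀ : C (χ 1) - C (d 0) = C a := by rw [← map_sub, h₀]
  have hS₀ : (X + C a) * p 0 = q 1 + C (χ 1) * q 0 := by
    rw [hp.zero, hq.zero, hq.one]
    linear_combination -hC₀
  suffices h : ∀ n, (X + C a) * p n = q (n + 1) + C (χ (n + 1)) * q n ∧
      (X + C a) * p (n + 1) = q (n + 2) + C (χ (n + 2)) * q (n + 1) from (h n).1
  intro n
  induction n with
  | zero =>
    refine ⟨hS₀, ?_⟩
    have e₁ : C (χ 2) - C (d 1) = C (χ 1) - C (c 0) := by rw [← map_sub, ← map_sub, hχ]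
    have e₂ : C (χ 1) * (C (d 0) - C (c 0)) + C (μ 1) = 0 := by
      rw [← map_sub, ← map_mul, ← map_add, hμ₀, map_zero]
    rw [hp.one, hq.add_two, hq.one, hq.zero]
    linear_combination (C (d 0) - X) * e₁ + e₂ - (X - C (c 0)) * hC₀
  | succ n ih =>
    refine ⟨ih.2, ?_⟩
    show (X + C a) * p (n + 2) = q (n + 3) + C (χ (n + 3)) * q (n + 2)
    have e₁ : C (χ (n + 3)) - C (d (n + 2)) = C (χ (n + 2)) - C (c (n + 1)) := by
      rw [← map_sub, ← map_sub, hχ]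
    have e₂ : C (χ (n + 2)) * (C (d (n + 1)) - C (c (n + 1))) + C (μ (n + 2)) = C (l (n + 1)) := by
      rw [← map_sub, ← map_mul, ← map_add, hμ]
    have e₃ : C (χ (n + 2)) * C (μ (n + 1)) = C (l (n + 1)) * C (χ (n + 1)) := by
      rw [← map_mul, ← map_mul, hl]
    have hq₃ : q (n + 3) = (X - C (d (n + 2))) * q (n + 2) - C (μ (n + 2)) * q (n + 1) :=
      hq.add_two (n + 1)
    linear_combination (X + C a) * hp.add_two n - hq₃ + (X - C (c (n + 1))) * ih.2 - C (l (n + 1)) * ih.1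
      - C (χ (n + 2)) * hq.add_two n - q (n + 2) * e₁ + q (n + 1) * e₂ + q n * e₃

end Connection

theorem add_natCast_sub_one_ne_zero {s : ℝ} (hs : -2 < s) (h_neg_one : s ≠ -1) (h_zero : s ≠ 0)
    (h_one : s ≠ 1) : ∀ k : ℕ, s + k - 1 ≠ 0
  | 0 => by simpa [sub_eq_zero] using h_one
  | 1 => by simpa using h_zero
  | 2 => by intro h; norm_num at h; exact h_neg_one (by linarith)
  | k + 3 => by have : (0 : ℝ) ≤ k := k.cast_nonneg; push_cast; intro h; linarith

section JacobiCoefficients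

variable {α β : ℝ}

theorem two_mul_add_add_natCast_sub_one_ne_zero (hs : ∀ k : ℕ, α + β + k - 1 ≠ 0) (n j : ℕ) :
    2 * (n : ℝ) + α + β + j - 1 ≠ 0 := by
  convert hs (2 * n + j) using 1
  push_cast
  ring

theorem jacobiChi_one_sub_jacobiC (hs : ∀ k : ℕ, α + β + k - 1 ≠ 0) :
    jacobiChi α β 1 - jacobiC α (β - 1) 0 = 1 := by
  have h₀ := hs 0
  have h₁ := hs 1
  have h₂ := hs 2
  norm_num at h₀ h₁ h₂
  ring_nf at h₀ h₁ h₂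
  unfold jacobiChi jacobiC
  push_cast
  field_simp (disch := ring_nf; assumption)
  ring

theorem jacobiChi_add_two_sub_jacobiC (hs : ∀ k : ℕ, α + β + k - 1 ≠ 0) (n : ℕ) :
    jacobiChi α β (n + 2) - jacobiC α (β - 1) (n + 1) = jacobiChi α β (n + 1) - jacobiC α β n := by
  have h := two_mul_add_add_natCast_sub_one_ne_zero hs n
  have h₁ := h 1
  have h₂ := h 2
  have h₃ := h 3
  have h₄ := h 4
  have h₅ := h 5
  ring_nf at h₁ h₂ h₃ h₄ h₅
  unfold jacobiChi jacobiC
  push_cast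
  field_simp (disch := ring_nf; assumption)
  ring

theorem jacobiChi_mul_sub_add_jacobiL (hs : ∀ k : ℕ, α + β + k - 1 ≠ 0) (n : ℕ) :
    jacobiChi α β (n + 1) * (jacobiC α (β - 1) n - jacobiC α β n) + jacobiL α (β - 1) (n + 1) =
      jacobiL α β n := by
  have h := two_mul_add_add_natCast_sub_one_ne_zero hs n
  have h₀ := h 0
  have h₁ := h 1
  have h₂ := h 2
  have h₃ := h 3
  ring_nf at h₀ h₁ h₂ h₃
  unfold jacobiChi jacobiC jacobiL
  push_cast
  field_simp (disch := ring_nf; assumption)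
  ring

theorem jacobiChi_mul_jacobiL (n : ℕ) :
    jacobiChi α β (n + 2) * jacobiL α (β - 1) (n + 1) = jacobiL α β (n + 1) * jacobiChi α β (n + 1) := by
  unfold jacobiChi jacobiL
  rw [div_mul_div_comm, div_mul_div_comm]
  push_cast
  congr 1 <;> ring

end JacobiCoefficients

theorem quasiGeronimus_jacobi_compact_sol4_general
    (α β : ℝ) (hα : -1 < α) (hβ : -1 < β)
    (hab1 : α + β ≠ -1) (hab0 : α + β ≠ 0) (hab2 : α + β ≠ 1) :
    ∀ n : ℕ, 1 ≤ n →
      (X + 1) * jacobiP α β (n - 1) =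
        jacobiP α (β - 1) n
        + Polynomial.C (2 * (β + (n : ℝ) - 1) * ((n : ℝ) + α + β - 1) /
            ((2 * (n : ℝ) + α + β - 1) * (2 * (n : ℝ) + α + β - 2)))
          * jacobiP α (β - 1) (n - 1) := by
  intro n hn
  obtain ⟨m, rfl⟩ := Nat.exists_eq_add_of_le' hn
  have hs := add_natCast_sub_one_ne_zero (by linarith) hab1 hab0 hab2
  have hμ₀ : jacobiChi α β 1 * (jacobiC α (β - 1) 0 - jacobiC α β 0) + jacobiL α (β - 1) 1 = 0 := by
    simpa [jacobiL] using jacobiChi_mul_sub_add_jacobiL hs 0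
  have h := X_add_C_mul_eq_add_C_mul_of_isMonicRecurrence (jacobiP_isMonicRecurrence α β)
    (jacobiP_isMonicRecurrence α (β - 1)) (jacobiChi_one_sub_jacobiC hs)
    (jacobiChi_add_two_sub_jacobiC hs) hμ₀ (fun n => jacobiChi_mul_sub_add_jacobiL hs (n + 1))
    jacobiChi_mul_jacobiL m
  rw [map_one] at h
  rwa [Nat.add_sub_cancel]

/-- compact form of the quasi-Geronimus Jacobi polynomial (Solution 4):
`(x+1) P_{n-1}^{(α,β)} = P_n^{(α,β-1)} + χ_n P_{n-1}^{(α,β-1)}`. -/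
theorem quasiGeronimus_jacobi_compact_sol4
    (α β : ℝ) (hα : -1 < α) (hβ : -1 < β)
    (hab1 : α + β ≠ -1) (hab0 : α + β ≠ 0) (hab2 : α + β ≠ 1) (hab3 : α + β ≠ 2) :
    ∀ n : ℕ, 1 ≤ n →
      (X + 1) * jacobiP α β (n - 1) =
        jacobiP α (β - 1) n
        + Polynomial.C (2 * (β + (n : ℝ) - 1) * ((n : ℝ) + α + β - 1) /
            ((2 * (n : ℝ) + α + β - 1) * (2 * (n : ℝ) + α + β - 2)))
          * jacobiP α (β - 1) (n - 1) :=
  quasiGeronimus_jacobi_compact_sol4_general α β hα hβ hab1 hab0 hab2
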